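/- Let F be a field of characteristic zero, t ∈ F with t - 1 not an integer, and let r ∈ F(x) be a rational function having a pole of order n ≥ 1 at 0. Then the rational function r' + ((t-1-x)/x)·r also has a pole of order n at 0. -/

import Mathlib

/-!
Write `r = p / q` in lowest terms and `q = x ^ n * u` with `u(0) ≠ 0`; since `n ≥ 1`,
coprimality gives `p(0) ≠ 0`. Multiplying `s = r' + ((t - 1 - x) / x) r` by `x q²` gives
the polynomial `N = x W(q, p) + (t - 1 - x) p q = x ^ n M` with
`M(0) = (t - 1 - n) p(0) u(0) ≠ 0`. Thus `N` vanishes to order exactly `n` at `0` while `x q²`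
vanishes to order `2n + 1`, which is impossible in `s.num * (x q²) = N * s.denom` unless
`s.denom` vanishes at `0`.
-/

open Polynomial

namespace Polynomial

variable {R : Type*} [CommRing R]

theorem X_mul_wronskian_X_pow_mul (n : ℕ) (u p : R[X]) :
    X * wronskian (X ^ n * u) p = X ^ n * (X * wronskian u p - C (n : R) * u * p) := by
  cases n with
  | zero => simp
  | succ k =>
    simp only [wronskian, derivative_mul, derivative_X_pow]
    push_cast
    ring

theorem rootMultiplicity_zero_X_pow_mul {M : R[X]} (hM : M.eval 0 ≠ 0) (k : ℕ) :
    (X ^ k * M).rootMultiplicity 0 = k := by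
  have h := rootMultiplicity_mul_X_sub_C_pow (p := M) (a := 0) (n := k) (fun h => hM (by simp [h]))
  rwa [C_0, sub_zero, rootMultiplicity_eq_zero hM, zero_add, mul_comm] at h

theorem X_mul_wronskian_add_eq_X_pow_mul [IsDomain R] {p u : R[X]} {n : ℕ} {c : R}
    (hp : p.eval 0 ≠ 0) (hu : u.eval 0 ≠ 0) (hc : (n : R) ≠ c) :
    ∃ M : R[X], X * wronskian (X ^ n * u) p + (C c - X) * p * (X ^ n * u) = X ^ n * M ∧
      M.eval 0 ≠ 0 := by
  refine ⟨X * wronskian u p + (C (c - n) - X) * p * u, ?_, ?_⟩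
  · rw [X_mul_wronskian_X_pow_mul, C_sub]
    ring
  · simpa [sub_eq_zero, hp, hu] using hc.symm

end Polynomial

namespace RatFunc

variable {F : Type*} [Field F]

noncomputable def firstOrderOp (δ : Derivation F (RatFunc F) (RatFunc F)) (c : F) (r : RatFunc F) :
    RatFunc F :=
  δ r + ((C c - X) / X) * r

theorem derivation_algebraMap {δ : Derivation F (RatFunc F) (RatFunc F)} (hδ : δ X = 1)
    (f : F[X]) :
    δ (algebraMap F[X] (RatFunc F) f) = algebraMap F[X] (RatFunc F) (derivative f) := by
  rw [← aeval_X_left_eq_algebraMap, ← aeval_X_left_eq_algebraMap, Derivation.map_aeval, hδ,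
    smul_eq_mul, mul_one]

theorem derivation_div_mul_sq {δ : Derivation F (RatFunc F) (RatFunc F)} (hδ : δ X = 1)
    (p : F[X]) {q : F[X]} (hq : q ≠ 0) :
    δ (algebraMap F[X] (RatFunc F) p / algebraMap F[X] (RatFunc F) q) *
      algebraMap F[X] (RatFunc F) (q ^ 2) = algebraMap F[X] (RatFunc F) (wronskian q p) := by
  have hq' : algebraMap F[X] (RatFunc F) q ≠ 0 := algebraMap_ne_zero hq
  rw [Derivation.leibniz_div, derivation_algebraMap hδ, derivation_algebraMap hδ, wronskian]
  simp only [map_pow, map_sub, map_mul, smul_eq_mul]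
  field_simp

theorem firstOrderOp_mul_X_mul_denom_sq {δ : Derivation F (RatFunc F) (RatFunc F)}
    (hδ : δ X = 1) (c : F) (r : RatFunc F) :
    firstOrderOp δ c r * algebraMap F[X] (RatFunc F) (Polynomial.X * r.denom ^ 2) =
      algebraMap F[X] (RatFunc F) (Polynomial.X * wronskian r.denom r.num +
        (Polynomial.C c - Polynomial.X) * r.num * r.denom) := by
  have hδr := derivation_div_mul_sq hδ r.num r.denom_ne_zero
  rw [r.num_div_denom] at hδr
  have hr : r * algebraMap F[X] (RatFunc F) r.denom = algebraMap F[X] (RatFunc F) r.num := by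
    nth_rewrite 1 [← r.num_div_denom]
    exact div_mul_cancel₀ _ (algebraMap_ne_zero r.denom_ne_zero)
  have hX : (X : RatFunc F) ≠ 0 := X_ne_zero
  simp only [firstOrderOp, map_mul, map_add, map_sub, map_pow, algebraMap_X, algebraMap_C,
    ← hδr]
  field_simp
  linear_combination (C c - X) * algebraMap F[X] (RatFunc F) r.denom * hr

theorem num_eval_ne_zero_of_denom_eval_eq_zero {r : RatFunc F} {a : F}
    (h : r.denom.eval a = 0) : r.num.eval a ≠ 0 := by
  obtain ⟨u, v, huv⟩ := r.isCoprime_num_denom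
  intro hnum
  simpa [hnum, h] using congrArg (Polynomial.eval a) huv

theorem denom_eval_eq_zero_of_mul_eq {s : RatFunc F} {f g : F[X]} {a : F}
    (h : s * algebraMap F[X] (RatFunc F) g = algebraMap F[X] (RatFunc F) f) (hf : f ≠ 0)
    (hlt : f.rootMultiplicity a < g.rootMultiplicity a) : s.denom.eval a = 0 := by
  by_contra hs
  have hg : g ≠ 0 := by rintro rfl; simp at hlt
  have hcross : s.num * g = f * s.denom :=
    (num_mul_eq_mul_denom_iff hg).mpr (eq_div_of_mul_eq (algebraMap_ne_zero hg) h)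
  have hnum : s.num ≠ 0 := by
    rintro h0
    rw [h0, zero_mul] at hcross
    exact mul_ne_zero hf s.denom_ne_zero hcross.symm
  have := congrArg (rootMultiplicity a) hcross
  rw [rootMultiplicity_mul (mul_ne_zero hnum hg),
    rootMultiplicity_mul (mul_ne_zero hf s.denom_ne_zero), rootMultiplicity_eq_zero hs] at this
  omega

end RatFunc

theorem pole_at_zero_of_first_order_operator_general
    (F : Type*) [Field F]
    (δ : Derivation F (RatFunc F) (RatFunc F)) (hδ : δ RatFunc.X = 1)
    (t : F) (ht : ∀ m : ℤ, (m : F) ≠ t - 1)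
    (r : RatFunc F) (n : ℕ) (hn : 1 ≤ n)
    (hpole : (r.denom).rootMultiplicity 0 = n) :
    ((δ r + ((RatFunc.C (t - 1) - RatFunc.X) / RatFunc.X) * r).denom).eval 0 = 0 := by
  obtain ⟨u, hqu, hu⟩ :=
    exists_eq_pow_rootMultiplicity_mul_and_not_dvd r.denom r.denom_ne_zero 0
  rw [dvd_iff_isRoot, IsRoot.def] at hu
  rw [hpole, C_0, sub_zero] at hqu
  have hp : r.num.eval 0 ≠ 0 := RatFunc.num_eval_ne_zero_of_denom_eval_eq_zero <| by
    simp [hqu, zero_pow (Nat.one_le_iff_ne_zero.mp hn)]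
  obtain ⟨M, hN, hM⟩ := X_mul_wronskian_add_eq_X_pow_mul (c := t - 1) hp hu
    (by exact_mod_cast ht n)
  refine RatFunc.denom_eval_eq_zero_of_mul_eq
    (RatFunc.firstOrderOp_mul_X_mul_denom_sq hδ (t - 1) r) ?_ ?_
  · rw [hqu, hN]
    exact mul_ne_zero (pow_ne_zero _ X_ne_zero) (fun h => hM (by simp [h]))
  · rw [hqu, hN, rootMultiplicity_zero_X_pow_mul hM,
      show X * (X ^ n * u) ^ 2 = X ^ (2 * n + 1) * u ^ 2 by ring,
      rootMultiplicity_zero_X_pow_mul (by simpa using hu)]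
    omega

/-- If `t - 1` is not an integer and `r ∈ F(x)` has a pole of order `n ≥ 1` at `0`
(i.e. `0` is a root of multiplicity `n` of the reduced denominator of `r`), then
`r' + ((t-1-x)/x)·r` also has a pole at `0` (its reduced denominator vanishes at `0`). -/
theorem pole_at_zero_of_first_order_operator
    (F : Type*) [Field F] [CharZero F]
    (δ : Derivation F (RatFunc F) (RatFunc F)) (hδ : δ RatFunc.X = 1)
    (t : F) (ht : ∀ m : ℤ, (m : F) ≠ t - 1)
    (r : RatFunc F) (n : ℕ) (hn : 1 ≤ n)
    (hpole : (r.denom).rootMultiplicity 0 = n) :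
    ((δ r + ((RatFunc.C (t - 1) - RatFunc.X) / RatFunc.X) * r).denom).eval 0 = 0 :=
  pole_at_zero_of_first_order_operator_general F δ hδ t ht r n hn hpole
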